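/- Let H0 and H1 be complex Hilbert spaces and let A0 on H0 and A1 on H1 be bounded self-adjoint operators whose spectra are disjoint, with d := dist(spectrum(A0), spectrum(A1)) > 0. Assume in addition that the convex hull of the real spectrum of A0 is disjoint from the spectrum of A1, or the spectrum of A0 is disjoint from the convex hull of the real spectrum of A1 (this covers both the case of subordinated spectra and the case where one spectrum lies in a finite gap of the other). Then for every bounded operator Y : H0 → H1 the Sylvester equation X A0 − A1 X = Y has a unique bounded solution X, and this solution satisfies d·‖X‖ ≤ ‖Y‖. (Bounded-operator version of Theorem 3.6 (ii) of the paper.) -/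

import Mathlib

/-!
Shift both operators by the midpoint `c` of the convex hull `[m, M]` of the spectrum of the
operator whose hull is avoided, say `A0`. Then `‖A0 - c‖ ≤ r := (M - m) / 2`, while every
spectral value of `A1 - c` lies outside `[-r, r]` at distance at least `d` from `±r`, so
`A1 - c` is invertible with `‖(A1 - c)⁻¹‖ ≤ 1 / (r + d)`. The shifted equation is equivalent to
`X = (A1 - c)⁻¹ X (A0 - c) - (A1 - c)⁻¹ Y`, whose right-hand side is a contraction with constant
`r / (r + d)`; this gives existence and uniqueness, and the fixed-point identity itself gives
`(r + d) ‖X‖ ≤ r ‖X‖ + ‖Y‖`. When the hull of the spectrum of `A1` is avoided instead, one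
inverts `A0 - c` and uses `X = (A1 - c) X (A0 - c)⁻¹ + Y (A0 - c)⁻¹`.
-/

open Complex Set ContinuousLinearMap
open scoped Ring

theorem existsUnique_and_mul_norm_le_of_affine_contraction {E F : Type*}
    [NormedAddCommGroup E] [CompleteSpace E] [NormedAddCommGroup F]
    (S : E → F) (T : E →+ E) (R : F → E) (hS : ∀ x y, S x = y ↔ x = T x + R y)
    {r d : ℝ} (hr : 0 ≤ r) (hd : 0 < d)
    (hT : ∀ x, (r + d) * ‖T x‖ ≤ r * ‖x‖) (hR : ∀ y, (r + d) * ‖R y‖ ≤ ‖y‖) (y : F) :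
    (∃! x, S x = y) ∧ ∀ x, S x = y → d * ‖x‖ ≤ ‖y‖ := by
  have hrd : 0 < r + d := by linarith
  set K : NNReal := ⟨r / (r + d), by positivity⟩
  have hK : (K : ℝ) = r / (r + d) := rfl
  have hTK : ∀ x, ‖T x‖ ≤ K * ‖x‖ := fun x => by
    rw [hK, div_mul_eq_mul_div, le_div_iff₀ hrd, mul_comm]
    exact hT x
  have hf : ContractingWith K (fun x => T x + R y) := by
    refine ⟨by rw [← NNReal.coe_lt_coe, hK, NNReal.coe_one, div_lt_one hrd]; linarith, ?_⟩
    refine LipschitzWith.of_dist_le_mul fun x x' => ?_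
    rw [dist_add_right, dist_eq_norm, dist_eq_norm, ← map_sub]
    exact hTK _
  refine ⟨⟨hf.fixedPoint, (hS _ _).2 hf.fixedPoint_isFixedPt.symm,
    fun x hx => hf.fixedPoint_unique ((hS _ _).1 hx).symm⟩, fun x hx => ?_⟩
  have hx : ‖x‖ ≤ ‖T x‖ + ‖R y‖ := by
    conv_lhs => rw [(hS x y).1 hx]
    exact norm_add_le _ _
  nlinarith [hT x, hR y]

section Sylvester

variable {E F : Type*} [NormedAddCommGroup E] [NormedSpace ℂ E]
  [NormedAddCommGroup F] [NormedSpace ℂ F]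

def sylvester (B0 : E →L[ℂ] E) (B1 : F →L[ℂ] F) (X : E →L[ℂ] F) : E →L[ℂ] F :=
  X ∘L B0 - B1 ∘L X

def SylvesterWellPosed (B0 : E →L[ℂ] E) (B1 : F →L[ℂ] F) (d : ℝ) : Prop :=
  ∀ Y, (∃! X, sylvester B0 B1 X = Y) ∧ ∀ X, sylvester B0 B1 X = Y → d * ‖X‖ ≤ ‖Y‖

theorem sylvesterWellPosed_sub_algebraMap {B0 : E →L[ℂ] E} {B1 : F →L[ℂ] F} {d : ℝ} (c : ℂ) :
    SylvesterWellPosed (B0 - algebraMap ℂ _ c) (B1 - algebraMap ℂ _ c) d ↔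
      SylvesterWellPosed B0 B1 d := by
  have : sylvester (B0 - algebraMap ℂ _ c) (B1 - algebraMap ℂ _ c) = sylvester B0 B1 := by
    ext X x
    simp [sylvester]
  rw [SylvesterWellPosed, SylvesterWellPosed, this]

theorem norm_comp_comp_le_of_le {G H : Type*} [NormedAddCommGroup G] [NormedSpace ℂ G]
    [NormedAddCommGroup H] [NormedSpace ℂ H] {P : F →L[ℂ] G} {Q : H →L[ℂ] E} {s t : ℝ}
    (hP : ‖P‖ ≤ s) (hQ : ‖Q‖ ≤ t) (X : E →L[ℂ] F) :
    ‖P ∘L X ∘L Q‖ ≤ s * t * ‖X‖ :=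
  calc ‖P ∘L X ∘L Q‖ ≤ ‖P‖ * (‖X‖ * ‖Q‖) :=
        (opNorm_comp_le _ _).trans (by gcongr; exact opNorm_comp_le _ _)
    _ ≤ s * (‖X‖ * t) := by gcongr; exact (norm_nonneg _).trans hP
    _ = s * t * ‖X‖ := by ring

variable [CompleteSpace F]

theorem sylvesterWellPosed_of_isUnit_right (B0 : E →L[ℂ] E) {B1 : F →L[ℂ] F}
    (hB1 : IsUnit B1) {r d : ℝ} (hr : 0 ≤ r) (hd : 0 < d) (hB0 : ‖B0‖ ≤ r)
    (hB1inv : ‖B1⁻¹ʳ‖ ≤ (r + d)⁻¹) : SylvesterWellPosed B0 B1 d := by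
  have hrd : 0 < r + d := by linarith
  have hinv : B1⁻¹ʳ ∘L B1 = ContinuousLinearMap.id ℂ F := Ring.inverse_mul_cancel B1 hB1
  have hinv' : B1 ∘L B1⁻¹ʳ = ContinuousLinearMap.id ℂ F := Ring.mul_inverse_cancel B1 hB1
  refine existsUnique_and_mul_norm_le_of_affine_contraction _
    (AddMonoidHom.mk' (fun X => B1⁻¹ʳ ∘L X ∘L B0) fun X X' => by simp [add_comp, comp_add])
    (fun Y => -(B1⁻¹ʳ ∘L Y)) (fun X Y => ?_) hr hd (fun X => ?_) (fun Y => ?_)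
  · have hcancel : sylvester B0 B1 X = Y ↔ B1⁻¹ʳ ∘L sylvester B0 B1 X = B1⁻¹ʳ ∘L Y :=
      ⟨congrArg _, fun h => by simpa [← comp_assoc, hinv'] using congrArg (B1 ∘L ·) h⟩
    have hlhs : B1⁻¹ʳ ∘L sylvester B0 B1 X = B1⁻¹ʳ ∘L X ∘L B0 - X := by
      simp [sylvester, comp_sub, ← comp_assoc, hinv]
    rw [hcancel, hlhs, AddMonoidHom.mk'_apply, eq_add_neg_iff_add_eq, sub_eq_iff_eq_add', eq_comm]
  · calc (r + d) * ‖B1⁻¹ʳ ∘L X ∘L B0‖ ≤ (r + d) * ((r + d)⁻¹ * r * ‖X‖) := by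
          gcongr; exact norm_comp_comp_le_of_le hB1inv hB0 X
      _ = r * ‖X‖ := by field_simp
  · calc (r + d) * ‖-(B1⁻¹ʳ ∘L Y)‖ ≤ (r + d) * ((r + d)⁻¹ * ‖Y‖) := by
          rw [norm_neg]; gcongr; exact (opNorm_comp_le _ _).trans (by gcongr)
      _ = ‖Y‖ := by field_simp

theorem sylvesterWellPosed_of_isUnit_left {B0 : E →L[ℂ] E} (B1 : F →L[ℂ] F)
    (hB0 : IsUnit B0) {r d : ℝ} (hr : 0 ≤ r) (hd : 0 < d) (hB1 : ‖B1‖ ≤ r)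
    (hB0inv : ‖B0⁻¹ʳ‖ ≤ (r + d)⁻¹) : SylvesterWellPosed B0 B1 d := by
  have hrd : 0 < r + d := by linarith
  have hinv : B0⁻¹ʳ ∘L B0 = ContinuousLinearMap.id ℂ E := Ring.inverse_mul_cancel B0 hB0
  have hinv' : B0 ∘L B0⁻¹ʳ = ContinuousLinearMap.id ℂ E := Ring.mul_inverse_cancel B0 hB0
  refine existsUnique_and_mul_norm_le_of_affine_contraction _
    (AddMonoidHom.mk' (fun X => B1 ∘L X ∘L B0⁻¹ʳ) fun X X' => by simp [add_comp, comp_add])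
    (fun Y => Y ∘L B0⁻¹ʳ) (fun X Y => ?_) hr hd (fun X => ?_) (fun Y => ?_)
  · have hcancel : sylvester B0 B1 X = Y ↔ sylvester B0 B1 X ∘L B0⁻¹ʳ = Y ∘L B0⁻¹ʳ :=
      ⟨congrArg (· ∘L _), fun h => by simpa [comp_assoc, hinv] using congrArg (· ∘L B0) h⟩
    have hlhs : sylvester B0 B1 X ∘L B0⁻¹ʳ = X - B1 ∘L X ∘L B0⁻¹ʳ := by
      simp [sylvester, sub_comp, comp_assoc, hinv']
    rw [hcancel, hlhs, AddMonoidHom.mk'_apply, sub_eq_iff_eq_add']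
  · calc (r + d) * ‖B1 ∘L X ∘L B0⁻¹ʳ‖ ≤ (r + d) * (r * (r + d)⁻¹ * ‖X‖) := by
          gcongr; exact norm_comp_comp_le_of_le hB1 hB0inv X
      _ = r * ‖X‖ := by field_simp
  · calc (r + d) * ‖Y ∘L B0⁻¹ʳ‖ ≤ (r + d) * (‖Y‖ * (r + d)⁻¹) := by
          gcongr; exact (opNorm_comp_le _ _).trans (by gcongr)
      _ = ‖Y‖ := by field_simp

end Sylvester

section CStarAlgebra

variable {A : Type*} [CStarAlgebra A]

theorem IsSelfAdjoint.norm_le_of_forall_mem_spectrum {a : A} (ha : IsSelfAdjoint a) {t : ℝ}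
    (ht : 0 ≤ t) (h : ∀ z ∈ spectrum ℂ a, ‖z‖ ≤ t) : ‖a‖ ≤ t := by
  rw [← ha.toReal_spectralRadius_complex_eq_norm]
  refine ENNReal.toReal_le_of_le_ofReal ht (iSup₂_le fun z hz => ?_)
  rw [← enorm_eq_nnnorm, ← ofReal_norm]
  exact ENNReal.ofReal_le_ofReal (h z hz)

theorem IsSelfAdjoint.isUnit_and_norm_ringInverse_le {b : A} (hb : IsSelfAdjoint b) {t : ℝ}
    (ht : 0 < t) (h : ∀ z ∈ spectrum ℂ b, t ≤ ‖z‖) : IsUnit b ∧ ‖b⁻¹ʳ‖ ≤ t⁻¹ := by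
  have hunit : IsUnit b := (spectrum.zero_notMem_iff ℂ).1 fun h0 => by
    simpa using (h 0 h0).trans_lt' ht
  refine ⟨hunit, hb.ringInverse.norm_le_of_forall_mem_spectrum (by positivity) fun z hz => ?_⟩
  rw [← hunit.unit_spec, Ring.inverse_unit, ← spectrum.map_inv, Set.mem_inv] at hz
  have hz' := h _ hz
  rw [norm_inv] at hz'
  exact (le_inv_comm₀ ht (inv_pos.1 (ht.trans_le hz'))).1 hz'

theorem spectrum_sub_algebraMap_ofReal {a : A} (c : ℝ) :
    spectrum ℂ (a - algebraMap ℂ A c) = (· - (c : ℂ)) '' spectrum ℂ a := by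
  rw [← spectrum.sub_singleton_eq, Set.sub_singleton]

theorem isSelfAdjoint_algebraMap_ofReal (c : ℝ) : IsSelfAdjoint (algebraMap ℂ A c) :=
  IsSelfAdjoint.algebraMap A (conj_ofReal c)

end CStarAlgebra

theorem add_le_abs_sub_midpoint {m M y d : ℝ} (hmM : m ≤ M) (hy : y ∉ Icc m M)
    (hm : d ≤ |m - y|) (hM : d ≤ |M - y|) : (M - m) / 2 + d ≤ |y - (m + M) / 2| := by
  rw [mem_Icc, not_and_or, not_le, not_le] at hy
  rcases hy with hy | hy
  · rw [abs_of_pos (by linarith)] at hm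
    rw [abs_of_neg (by linarith)]
    linarith
  · rw [abs_of_neg (by linarith)] at hM
    rw [abs_of_pos (by linarith)]
    linarith

theorem Complex.norm_sub_ofReal_of_eq_re {z : ℂ} (hz : z = z.re) (c : ℝ) :
    ‖z - c‖ = |z.re - c| := by
  rw [hz, ← ofReal_sub, norm_real, Real.norm_eq_abs, ofReal_re]

theorem IsSelfAdjoint.exists_norm_sub_le_and_add_le_norm_sub {A B : Type*} [CStarAlgebra A]
    [CStarAlgebra B] {a : A} {b : B} (ha : IsSelfAdjoint a) (hb : IsSelfAdjoint b)
    (hne : (spectrum ℂ a).Nonempty) {d : ℝ}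
    (hdist : ∀ μ ∈ spectrum ℂ a, ∀ ν ∈ spectrum ℂ b, d ≤ dist μ ν)
    (hgap : Disjoint (convexHull ℝ (re '' spectrum ℂ a)) (re '' spectrum ℂ b)) :
    ∃ c r : ℝ, 0 ≤ r ∧ ‖a - algebraMap ℂ A c‖ ≤ r ∧
      ∀ ν ∈ spectrum ℂ (b - algebraMap ℂ B c), r + d ≤ ‖ν‖ := by
  have hS : IsCompact (re '' spectrum ℂ a) := (spectrum.isCompact a).image continuous_re
  obtain ⟨_, ⟨μm, hμm, rfl⟩, hm⟩ := hS.exists_isLeast (hne.image re)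
  obtain ⟨_, ⟨μM, hμM, rfl⟩, hM⟩ := hS.exists_isGreatest (hne.image re)
  have hmM : μm.re ≤ μM.re := hm ⟨μM, hμM, rfl⟩
  refine ⟨(μm.re + μM.re) / 2, (μM.re - μm.re) / 2, by linarith, ?_, ?_⟩
  · refine (ha.sub (isSelfAdjoint_algebraMap_ofReal _)).norm_le_of_forall_mem_spectrum
      (by linarith) fun z hz => ?_
    rw [spectrum_sub_algebraMap_ofReal] at hz
    obtain ⟨μ, hμ, rfl⟩ := hz
    rw [norm_sub_ofReal_of_eq_re (ha.mem_spectrum_eq_re hμ), abs_le]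
    have := hm ⟨μ, hμ, rfl⟩
    have := hM ⟨μ, hμ, rfl⟩
    constructor <;> linarith
  · intro z hz
    rw [spectrum_sub_algebraMap_ofReal] at hz
    obtain ⟨ν, hν, rfl⟩ := hz
    have hνre := hb.mem_spectrum_eq_re hν
    have hdist_re : ∀ μ ∈ spectrum ℂ a, d ≤ |μ.re - ν.re| := fun μ hμ => by
      rw [← norm_sub_ofReal_of_eq_re (ha.mem_spectrum_eq_re hμ), ← hνre, ← dist_eq_norm]
      exact hdist μ hμ ν hν
    rw [norm_sub_ofReal_of_eq_re hνre]
    refine add_le_abs_sub_midpoint hmM (fun hmem => hgap.ne_of_mem ?_ ⟨ν, hν, rfl⟩ rfl)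
      (hdist_re μm hμm) (hdist_re μM hμM)
    rw [← segment_eq_Icc hmM] at hmem
    exact segment_subset_convexHull (mem_image_of_mem re hμm) (mem_image_of_mem re hμM) hmem

section HilbertSpace

variable {H0 H1 : Type*}
  [NormedAddCommGroup H0] [InnerProductSpace ℂ H0] [CompleteSpace H0]
  [NormedAddCommGroup H1] [InnerProductSpace ℂ H1] [CompleteSpace H1]
  {A0 : H0 →L[ℂ] H0} {A1 : H1 →L[ℂ] H1} {d : ℝ}

theorem sylvesterWellPosed_of_convexHull_disjoint (hA0 : IsSelfAdjoint A0)
    (hA1 : IsSelfAdjoint A1) (hne : (spectrum ℂ A0).Nonempty) (hd : 0 < d)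
    (hdist : ∀ μ ∈ spectrum ℂ A0, ∀ ν ∈ spectrum ℂ A1, d ≤ dist μ ν)
    (hgap : Disjoint (convexHull ℝ (re '' spectrum ℂ A0)) (re '' spectrum ℂ A1)) :
    SylvesterWellPosed A0 A1 d := by
  obtain ⟨c, r, hr, hA0c, hA1c⟩ := hA0.exists_norm_sub_le_and_add_le_norm_sub hA1 hne hdist hgap
  obtain ⟨hunit, hinv⟩ := IsSelfAdjoint.isUnit_and_norm_ringInverse_le
    (hA1.sub (isSelfAdjoint_algebraMap_ofReal c)) (by positivity) hA1c
  exact (sylvesterWellPosed_sub_algebraMap c).1 <|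
    sylvesterWellPosed_of_isUnit_right _ hunit hr hd hA0c hinv

theorem sylvesterWellPosed_of_disjoint_convexHull (hA0 : IsSelfAdjoint A0)
    (hA1 : IsSelfAdjoint A1) (hne : (spectrum ℂ A1).Nonempty) (hd : 0 < d)
    (hdist : ∀ μ ∈ spectrum ℂ A0, ∀ ν ∈ spectrum ℂ A1, d ≤ dist μ ν)
    (hgap : Disjoint (re '' spectrum ℂ A0) (convexHull ℝ (re '' spectrum ℂ A1))) :
    SylvesterWellPosed A0 A1 d := by
  obtain ⟨c, r, hr, hA1c, hA0c⟩ := hA1.exists_norm_sub_le_and_add_le_norm_sub hA0 hne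
    (fun ν hν μ hμ => dist_comm μ ν ▸ hdist μ hμ ν hν) hgap.symm
  obtain ⟨hunit, hinv⟩ := IsSelfAdjoint.isUnit_and_norm_ringInverse_le
    (hA0.sub (isSelfAdjoint_algebraMap_ofReal c)) (by positivity) hA0c
  exact (sylvesterWellPosed_sub_algebraMap c).1 <|
    sylvesterWellPosed_of_isUnit_left _ hunit hr hd hA1c hinv

end HilbertSpace

theorem sylvester_selfAdjoint_annular_d_bound_general
    {H0 : Type*} [NormedAddCommGroup H0] [InnerProductSpace ℂ H0] [CompleteSpace H0]
    {H1 : Type*} [NormedAddCommGroup H1] [InnerProductSpace ℂ H1] [CompleteSpace H1]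
    (A0 : H0 →L[ℂ] H0) (A1 : H1 →L[ℂ] H1)
    (hA0 : IsSelfAdjoint A0) (hA1 : IsSelfAdjoint A1)
    (d : ℝ)
    (hd : d = sInf {t : ℝ | ∃ μ ∈ spectrum ℂ A0, ∃ ν ∈ spectrum ℂ A1, t = dist μ ν})
    (hd0 : 0 < d)
    (hgap :
      Disjoint (convexHull ℝ (Complex.re '' spectrum ℂ A0)) (Complex.re '' spectrum ℂ A1) ∨
      Disjoint (Complex.re '' spectrum ℂ A0) (convexHull ℝ (Complex.re '' spectrum ℂ A1)))
    (Y : H0 →L[ℂ] H1) :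
    (∃! X : H0 →L[ℂ] H1, X ∘L A0 - A1 ∘L X = Y) ∧
      ∀ X : H0 →L[ℂ] H1, X ∘L A0 - A1 ∘L X = Y → d * ‖X‖ ≤ ‖Y‖ := by
  have hdist : ∀ μ ∈ spectrum ℂ A0, ∀ ν ∈ spectrum ℂ A1, d ≤ dist μ ν := fun μ hμ ν hν =>
    hd ▸ csInf_le ⟨0, by rintro _ ⟨_, -, _, -, rfl⟩; exact dist_nonneg⟩ ⟨μ, hμ, ν, hν, rfl⟩
  -- `sInf ∅ = 0`, so `0 < d` forces both spectra to be nonempty.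
  obtain ⟨_, μ, hμ, ν, hν, -⟩ :
      {t : ℝ | ∃ μ ∈ spectrum ℂ A0, ∃ ν ∈ spectrum ℂ A1, t = dist μ ν}.Nonempty :=
    nonempty_iff_ne_empty.2 fun h => hd0.ne' (by rw [hd, h, Real.sInf_empty])
  rcases hgap with hgap | hgap
  · exact sylvesterWellPosed_of_convexHull_disjoint hA0 hA1 ⟨μ, hμ⟩ hd0 hdist hgap Y
  · exact sylvesterWellPosed_of_disjoint_convexHull hA0 hA1 ⟨ν, hν⟩ hd0 hdist hgap Y

/-- Bounded-operator version of Theorem 3.6 (ii) of the paper: if `A0` and `A1` are bounded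
self-adjoint operators with disjoint spectra separated by the distance `d > 0`, and moreover
the convex hull (in ℝ) of the (real) spectrum of one of them is disjoint from the spectrum
of the other, then for every bounded `Y : H0 → H1` the Sylvester equation `X A0 - A1 X = Y`
has a unique bounded solution `X`, and this solution satisfies `d‖X‖ ≤ ‖Y‖`. -/
theorem sylvester_selfAdjoint_annular_d_bound
    {H0 : Type*} [NormedAddCommGroup H0] [InnerProductSpace ℂ H0] [CompleteSpace H0]
    {H1 : Type*} [NormedAddCommGroup H1] [InnerProductSpace ℂ H1] [CompleteSpace H1]
    (A0 : H0 →L[ℂ] H0) (A1 : H1 →L[ℂ] H1)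
    (hA0 : IsSelfAdjoint A0) (hA1 : IsSelfAdjoint A1)
    (hdisj : spectrum ℂ A0 ∩ spectrum ℂ A1 = ∅)
    (d : ℝ)
    (hd : d = sInf {t : ℝ | ∃ μ ∈ spectrum ℂ A0, ∃ ν ∈ spectrum ℂ A1, t = dist μ ν})
    (hd0 : 0 < d)
    (hgap :
      Disjoint (convexHull ℝ (Complex.re '' spectrum ℂ A0)) (Complex.re '' spectrum ℂ A1) ∨
      Disjoint (Complex.re '' spectrum ℂ A0) (convexHull ℝ (Complex.re '' spectrum ℂ A1)))
    (Y : H0 →L[ℂ] H1) :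
    (∃! X : H0 →L[ℂ] H1, X ∘L A0 - A1 ∘L X = Y) ∧
      ∀ X : H0 →L[ℂ] H1, X ∘L A0 - A1 ∘L X = Y → d * ‖X‖ ≤ ‖Y‖ :=
  sylvester_selfAdjoint_annular_d_bound_general A0 A1 hA0 hA1 d hd hd0 hgap Y
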